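/- If f is a G-extremal function in BMO_na ∩ L^∞ with |f| = η a.e. on T, then η is constant a.e.; more precisely, if ∥f∥_∞ = 1 and Φ_f(z_0) = 1 for some z_0 ∈ D, then |f| = 1 a.e. on T and Pf(z_0) = 0. -/

import Mathlib

open MeasureTheory Complex Real Filter Topology
open scoped ENNReal

/-- Normalized arc-length measure on the circle, parametrized by angle θ ∈ (0, 2π]. -/
noncomputable def circleM : Measure ℝ :=
  (ENNReal.ofReal (2 * Real.pi))⁻¹ • (volume.restrict (Set.Ioc 0 (2 * Real.pi)))

/-- Poisson kernel (density of harmonic measure ω_z w.r.t. circleM) at the boundary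
point with angle θ. -/
noncomputable def pk (z : ℂ) (θ : ℝ) : ℝ :=
  (1 - ‖z‖ ^ 2) / ‖Complex.exp (θ * Complex.I) - z‖ ^ 2

/-- Poisson integral of a complex boundary function. -/
noncomputable def poissonInt (f : ℝ → ℂ) (z : ℂ) : ℂ :=
  ∫ θ, (pk z θ : ℂ) * f θ ∂circleM

/-- Poisson integral of a real boundary function. -/
noncomputable def poissonIntR (u : ℝ → ℝ) (z : ℂ) : ℝ :=
  ∫ θ, pk z θ * u θ ∂circleM

/-- Φ_f(z) = P(|f|²)(z) - |Pf(z)|². -/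
noncomputable def Phi (f : ℝ → ℂ) (z : ℂ) : ℝ :=
  (∫ θ, pk z θ * ‖f θ‖ ^ 2 ∂circleM) - ‖poissonInt f z‖ ^ 2

/-- The open unit disk. -/
def unitDisk : Set ℂ := Metric.ball 0 1

/-- The Garsia norm ‖f‖_G = sup_{z ∈ 𝔻} Φ_f(z)^{1/2}, valued in ℝ≥0∞. -/
noncomputable def garsiaNorm (f : ℝ → ℂ) : ℝ≥0∞ :=
  ⨆ z : unitDisk, ENNReal.ofReal (Real.sqrt (Phi f (z : ℂ)))

/- ### Auxiliary lemmas -/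

lemma exp_sub_ne (z : ℂ) (hz : ‖z‖ < 1) (θ : ℝ) :
    Complex.exp (θ * Complex.I) - z ≠ 0 := by
  intro h
  have h1 : ‖Complex.exp (θ * Complex.I)‖ = 1 := Complex.norm_exp_ofReal_mul_I θ
  have : Complex.exp (θ * Complex.I) = z := sub_eq_zero.mp h
  rw [this] at h1
  linarith

lemma cont_exp : Continuous fun θ : ℝ => Complex.exp (θ * Complex.I) :=
  Complex.continuous_exp.comp (by continuity)

lemma pk_eq_re (z : ℂ) (hz : ‖z‖ < 1) (θ : ℝ) :
    pk z θ = ((Complex.exp (θ * Complex.I) + z) / (Complex.exp (θ * Complex.I) - z)).re := by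
  unfold pk
  set w := Complex.exp (θ * Complex.I) with hw
  have h1 : ‖w‖ = 1 := Complex.norm_exp_ofReal_mul_I θ
  have hw2 : w.re ^ 2 + w.im ^ 2 = 1 := by
    have := Complex.sq_norm w
    rw [h1] at this
    simpa [Complex.normSq_apply, sq] using this.symm
  have labs : ∀ u : ℂ, ‖u‖ ^ 2 = Complex.normSq u := Complex.sq_norm
  rw [labs, labs, Complex.div_re, ← add_div]
  congr 1
  simp only [Complex.normSq_apply, Complex.sub_re, Complex.sub_im,
    Complex.add_re, Complex.add_im]
  linear_combination - hw2

lemma integral_exp_frac (z : ℂ) (hz : ‖z‖ < 1) :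
    ∫ θ in (0:ℝ)..(2*Real.pi),
      (Complex.exp (θ*Complex.I) + z) / (Complex.exp (θ*Complex.I) - z) = 2*Real.pi := by
  have hmem : z ∈ Metric.ball (0:ℂ) 1 := by
    simpa [Metric.mem_ball, Complex.dist_eq] using hz
  have key := circleIntegral.integral_sub_inv_of_mem_ball hmem
  simp only [circleIntegral, deriv_circleMap, circleMap_zero, one_mul, smul_eq_mul,
    Complex.ofReal_one] at key
  set g : ℝ → ℂ := fun θ => Complex.exp (θ*Complex.I) * Complex.I *
    (Complex.exp (θ*Complex.I) - z)⁻¹ with hg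
  have hgc : Continuous g := by
    apply (cont_exp.mul continuous_const).mul
    exact ((cont_exp.sub continuous_const).inv₀ (fun θ => exp_sub_ne z hz θ))
  have hid : ∀ θ : ℝ, (Complex.exp (θ*Complex.I) + z) / (Complex.exp (θ*Complex.I) - z)
      = (-2*Complex.I) * g θ - 1 := by
    intro θ
    have hne := exp_sub_ne z hz θ
    rw [hg]
    field_simp
    ring_nf
    simp [Complex.I_sq]
    ring
  have hig : IntervalIntegrable g volume 0 (2*Real.pi) := hgc.intervalIntegrable _ _
  calc ∫ θ in (0:ℝ)..(2*Real.pi),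
      (Complex.exp (θ*Complex.I) + z) / (Complex.exp (θ*Complex.I) - z)
      = ∫ θ in (0:ℝ)..(2*Real.pi), ((-2*Complex.I) * g θ - 1) := by
        simp only [hid]
    _ = ((-2*Complex.I) * ∫ θ in (0:ℝ)..(2*Real.pi), g θ) -
          ∫ θ in (0:ℝ)..(2*Real.pi), (1:ℂ) := by
        rw [intervalIntegral.integral_sub (hig.const_mul _) (intervalIntegrable_const),
          intervalIntegral.integral_const_mul]
    _ = 2*Real.pi := by
        have key' : (∫ θ in (0:ℝ)..(2*Real.pi), g θ) = 2*Real.pi*Complex.I := key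
        rw [key']
        simp only [intervalIntegral.integral_const, sub_zero, smul_eq_mul]
        ring_nf
        simp [Complex.I_sq]
        ring

lemma continuous_pk (z : ℂ) (hz : ‖z‖ < 1) : Continuous (pk z) := by
  unfold pk
  apply continuous_const.div
  · exact (continuous_norm.comp (cont_exp.sub continuous_const)).pow 2
  · intro θ
    exact pow_ne_zero 2 (norm_ne_zero_iff.mpr (exp_sub_ne z hz θ))

lemma pk_pos (z : ℂ) (hz : ‖z‖ < 1) (θ : ℝ) : 0 < pk z θ := by
  unfold pk
  apply div_pos
  · nlinarith [norm_nonneg z]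
  · have := norm_pos_iff.mpr (exp_sub_ne z hz θ)
    positivity

lemma twopi_pos : (0:ℝ) < 2 * Real.pi := by positivity

lemma integrable_pk (z : ℂ) (hz : ‖z‖ < 1) : Integrable (pk z) circleM := by
  unfold circleM
  refine Integrable.smul_measure ?_
    (by simpa [ENNReal.inv_ne_top] using (ENNReal.ofReal_pos.mpr twopi_pos).ne')
  exact (continuous_pk z hz).integrableOn_Ioc

lemma integral_pk (z : ℂ) (hz : ‖z‖ < 1) : ∫ θ, pk z θ ∂circleM = 1 := by
  have hIoc : ∫ θ in Set.Ioc (0:ℝ) (2*Real.pi), pk z θ = 2*Real.pi := by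
    have hcont : Continuous fun θ : ℝ =>
        (Complex.exp (θ*Complex.I) + z) / (Complex.exp (θ*Complex.I) - z) :=
      (cont_exp.add continuous_const).div (cont_exp.sub continuous_const)
        (fun θ => exp_sub_ne z hz θ)
    have hInt : IntegrableOn (fun θ : ℝ =>
        (Complex.exp (θ*Complex.I) + z) / (Complex.exp (θ*Complex.I) - z))
        (Set.Ioc (0:ℝ) (2*Real.pi)) volume := hcont.integrableOn_Ioc
    have hre := integral_re hInt
    have hiv : ∫ θ in Set.Ioc (0:ℝ) (2*Real.pi),
        (Complex.exp (θ*Complex.I) + z) / (Complex.exp (θ*Complex.I) - z) = 2*Real.pi := by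
      rw [← intervalIntegral.integral_of_le twopi_pos.le]
      exact integral_exp_frac z hz
    calc ∫ θ in Set.Ioc (0:ℝ) (2*Real.pi), pk z θ
        = ∫ θ in Set.Ioc (0:ℝ) (2*Real.pi),
            ((Complex.exp (θ*Complex.I) + z) / (Complex.exp (θ*Complex.I) - z)).re := by
          simp only [pk_eq_re z hz]
      _ = (∫ θ in Set.Ioc (0:ℝ) (2*Real.pi),
            (Complex.exp (θ*Complex.I) + z) / (Complex.exp (θ*Complex.I) - z)).re := by
          simpa using hre
      _ = 2*Real.pi := by rw [hiv]; simp
  rw [circleM, integral_smul_measure, hIoc]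
  rw [ENNReal.toReal_inv, ENNReal.toReal_ofReal twopi_pos.le, smul_eq_mul,
    inv_mul_cancel₀ twopi_pos.ne']

/-- Rigidity of G-extremal functions in BMO_na ∩ L^∞: if
‖f‖_∞ = 1 and Φ_f(z₀) = 1 at some z₀ ∈ 𝔻, then |f| = 1 a.e. on 𝕋 and
Pf(z₀) = 0; in particular |f| is constant a.e. -/
theorem G_extremal_bmo_na_rigidity (f : ℝ → ℂ) (hf : MemLp f ⊤ circleM)
    (hnorm : eLpNorm f ⊤ circleM = 1)
    (z₀ : ℂ) (hz₀ : z₀ ∈ unitDisk) (hatt : Phi f z₀ = 1) :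
    (∀ᵐ θ ∂circleM, ‖f θ‖ = 1) ∧ poissonInt f z₀ = 0 := by
  have hz : ‖z₀‖ < 1 := by
    simpa [unitDisk, Metric.mem_ball, Complex.dist_eq] using hz₀
  -- a.e. bound |f| ≤ 1
  have hb : ∀ᵐ θ ∂circleM, ‖f θ‖ ≤ 1 := by
    have h := enorm_ae_le_eLpNormEssSup f circleM
    rw [← eLpNorm_exponent_top, hnorm] at h
    filter_upwards [h] with θ hθ
    have h1 : (‖f θ‖₊ : ℝ≥0∞) ≤ 1 := hθ
    have h2 : ‖f θ‖₊ ≤ 1 := by exact_mod_cast h1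
    exact_mod_cast h2
  have hmeas : AEStronglyMeasurable f circleM := hf.1
  have ipk : Integrable (pk z₀) circleM := integrable_pk z₀ hz
  -- integrability of pk * |f|²
  have hasm : AEStronglyMeasurable (fun θ => pk z₀ θ * ‖f θ‖ ^ 2) circleM := by
    refine ((continuous_pk z₀ hz).aestronglyMeasurable).mul ?_
    have : AEStronglyMeasurable (fun θ => ‖f θ‖ * ‖f θ‖) circleM := hmeas.norm.mul hmeas.norm
    refine this.congr (Filter.EventuallyEq.of_eq ?_)
    funext θ
    simp [sq]
  have hint2 : Integrable (fun θ => pk z₀ θ * ‖f θ‖ ^ 2) circleM := by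
    refine Integrable.mono ipk hasm ?_
    filter_upwards [hb] with θ hθ
    have h0 : 0 ≤ ‖f θ‖ := norm_nonneg _
    have hp := (pk_pos z₀ hz θ).le
    rw [Real.norm_eq_abs, Real.norm_eq_abs,
      _root_.abs_of_nonneg (mul_nonneg hp (by positivity)), _root_.abs_of_nonneg hp]
    exact mul_le_of_le_one_right hp (by nlinarith)
  -- ∫ pk |f|² ≤ 1
  have hle : (∫ θ, pk z₀ θ * ‖f θ‖ ^ 2 ∂circleM) ≤ 1 := by
    rw [← integral_pk z₀ hz]
    refine integral_mono_ae hint2 ipk ?_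
    filter_upwards [hb] with θ hθ
    have h0 : 0 ≤ ‖f θ‖ := norm_nonneg _
    exact mul_le_of_le_one_right (pk_pos z₀ hz θ).le (by nlinarith)
  have hBnn : 0 ≤ ‖poissonInt f z₀‖ ^ 2 := by positivity
  unfold Phi at hatt
  -- Pf(z₀) = 0
  have hP0 : poissonInt f z₀ = 0 := by
    have : ‖poissonInt f z₀‖ ^ 2 = 0 := by linarith
    have habs : ‖poissonInt f z₀‖ = 0 := by
      nlinarith [norm_nonneg (poissonInt f z₀)]
    exact norm_eq_zero.mp habs
  have hA : (∫ θ, pk z₀ θ * ‖f θ‖ ^ 2 ∂circleM) = 1 := by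
    rw [hP0] at hatt
    simpa using hatt
  -- ∫ pk (1 - |f|²) = 0
  have hsub : Integrable (fun θ => pk z₀ θ * (1 - ‖f θ‖ ^ 2)) circleM := by
    have := ipk.sub hint2
    refine this.congr (Filter.EventuallyEq.of_eq ?_)
    funext θ
    simp only [Pi.sub_apply]
    ring
  have hzero : (∫ θ, pk z₀ θ * (1 - ‖f θ‖ ^ 2) ∂circleM) = 0 := by
    have : (∫ θ, pk z₀ θ * (1 - ‖f θ‖ ^ 2) ∂circleM)
        = (∫ θ, pk z₀ θ ∂circleM) - ∫ θ, pk z₀ θ * ‖f θ‖ ^ 2 ∂circleM := by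
      rw [← integral_sub ipk hint2]
      congr 1
      funext θ; ring
    rw [this, integral_pk z₀ hz, hA, sub_self]
  have hnonneg : 0 ≤ᵐ[circleM] fun θ => pk z₀ θ * (1 - ‖f θ‖ ^ 2) := by
    filter_upwards [hb] with θ hθ
    have h0 : 0 ≤ ‖f θ‖ := norm_nonneg _
    have hp := (pk_pos z₀ hz θ).le
    simp only [Pi.zero_apply]
    exact mul_nonneg hp (by nlinarith)
  have haezero := (integral_eq_zero_iff_of_nonneg_ae hnonneg hsub).mp hzero
  refine ⟨?_, hP0⟩
  filter_upwards [haezero, hb] with θ h1 h2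
  have hp := pk_pos z₀ hz θ
  have h1' : pk z₀ θ * (1 - ‖f θ‖ ^ 2) = 0 := h1
  have h3 : 1 - ‖f θ‖ ^ 2 = 0 := by
    rcases mul_eq_zero.mp h1' with h | h
    · exact absurd h hp.ne'
    · exact h
  have h0 : 0 ≤ ‖f θ‖ := norm_nonneg _
  have : (‖f θ‖ - 1) * (‖f θ‖ + 1) = 0 := by ring_nf; linarith
  rcases mul_eq_zero.mp this with h | h
  · linarith
  · linarith
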